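/- If C is a clique of the 1-skeleton of the order polytope O(P) of a finite poset P, then the convex hull conv(C) is a face of O(P). -/

import Mathlib

open Set

variable {α : Type*} [Fintype α] [PartialOrder α]

/-- A poset ideal (down-set) of a poset. -/
def IsPosetIdeal (I : Set α) : Prop := ∀ ⦃a b : α⦄, a ≤ b → b ∈ I → a ∈ I

/-- The indicator vector of a subset. -/
noncomputable def rho (I : Set α) : α → ℝ := I.indicator 1

/-- The order polytope of a finite poset. -/
noncomputable def orderPolytope (α : Type*) [Fintype α] [PartialOrder α] : Set (α → ℝ) :=
  convexHull ℝ {x | ∃ I : Set α, IsPosetIdeal I ∧ x = rho I}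

/-- A subset of a poset is connected if the induced subgraph of the Hasse diagram is connected. -/
def ConnectedIn (S : Set α) : Prop := ((SimpleGraph.hasse α).induce S).Connected

/-- `conv {v, w}` is an edge (1-dimensional face) of the polytope `P`. -/
def IsEdgeOf (P : Set (α → ℝ)) (v w : α → ℝ) : Prop :=
  v ≠ w ∧ IsExtreme ℝ P (segment ℝ v w)

/-!
The vertices of `O(P)` are the `ρ I`, `I` a lower set, and `ρ (I ∪ J) + ρ (I ∩ J) = ρ I + ρ J`;
so if `ρ I ρ J` is an edge, the vertex `ρ (I ∪ J)` lies on it and is one of its endpoints,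
whence `I ⊆ J` or `J ⊆ I`. A clique `C` is therefore a chain `𝒞` of lower sets. Adding up the
defining inequalities `x a ≤ 1`, `0 ≤ x a`, `x v ≤ x u` (`u ≤ v`) of `O(P)` that are tight on all
of `𝒞` gives a linear functional whose maximum on `O(P)` is attained exactly on a face `F`, and
`F` is the convex hull of its vertices (Krein–Milman). It remains to see that every vertex `ρ J`
of `F` lies in `C`; otherwise `J` cuts some step `I ⊂ M` of the chain in a way that the edge
`ρ I ρ M` turns into a comparable pair `u ≤ v` separated by `J` but by no member of `𝒞`,
contradicting the tightness of `x v ≤ x u`.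
-/

section Faces

variable {𝕜 E : Type*} [Field 𝕜] [LinearOrder 𝕜] [IsStrictOrderedRing 𝕜] [AddCommGroup E]
  [Module 𝕜 E]

theorem isExtreme_sep_eq_of_forall_le {A : Set E} (l : E →ₗ[𝕜] 𝕜) {c : 𝕜}
    (hl : ∀ x ∈ A, l x ≤ c) : IsExtreme 𝕜 A {x ∈ A | l x = c} := by
  refine ⟨sep_subset _ _, ?_⟩
  rintro x₁ hx₁ x₂ hx₂ _ ⟨-, hx⟩ ⟨a, b, ha, hb, hab, rfl⟩
  have hc : a * l x₁ + b * l x₂ = c := by simpa using hx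
  have hac : a * c ≤ a * l x₁ := by
    have : a * c = c - b * c := by linear_combination c * hab
    nlinarith [mul_le_mul_of_nonneg_left (hl x₂ hx₂) hb.le]
  exact ⟨hx₁, (hl x₁ hx₁).antisymm (le_of_mul_le_mul_left hac ha)⟩

theorem IsExtreme.mem_segment_of_add_eq {A : Set E} {x y x₁ x₂ : E}
    (h : IsExtreme 𝕜 A (segment 𝕜 x y)) (hx₁ : x₁ ∈ A) (hx₂ : x₂ ∈ A)
    (hsum : x₁ + x₂ = x + y) : x₁ ∈ segment 𝕜 x y :=
  h.left_mem_of_mem_openSegment hx₁ hx₂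
    ⟨2⁻¹, 2⁻¹, by norm_num, by norm_num, by norm_num, (smul_add _ _ _).symm⟩
    ⟨2⁻¹, 2⁻¹, by norm_num, by norm_num, by norm_num, by rw [← smul_add, hsum, smul_add]⟩

end Faces

section KreinMilman

variable {E : Type*} [AddCommGroup E] [Module ℝ E] [TopologicalSpace E] [T2Space E]
  [IsTopologicalAddGroup E] [ContinuousSMul ℝ E] [LocallyConvexSpace ℝ E]

theorem IsExtreme.subset_convexHull_inter {V F : Set E} (hV : V.Finite)
    (hF : IsExtreme ℝ (convexHull ℝ V) F) (hFc : IsCompact F) (hFconv : Convex ℝ F) :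
    F ⊆ convexHull ℝ (V ∩ F) :=
  calc F = closure (convexHull ℝ (F.extremePoints ℝ)) :=
        (closure_convexHull_extremePoints hFc hFconv).symm
    _ ⊆ closure (convexHull ℝ (V ∩ F)) := closure_mono <| convexHull_mono fun _ hx =>
        ⟨extremePoints_convexHull_subset (hF.extremePoints_subset_extremePoints hx),
          extremePoints_subset hx⟩
    _ = convexHull ℝ (V ∩ F) := ((hV.inter_of_left F).isClosed_convexHull ℝ).closure_eq

theorem isExtreme_convexHull_sep_eq {V : Set E} (hV : V.Finite) (l : StrongDual ℝ E) {c : ℝ}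
    (hl : ∀ v ∈ V, l v ≤ c) :
    IsExtreme ℝ (convexHull ℝ V) (convexHull ℝ {v ∈ V | l v = c}) := by
  have hle : ∀ x ∈ convexHull ℝ V, l x ≤ c :=
    convexHull_min hl (convex_halfSpace_le l.isLinear c)
  have hconv : Convex ℝ {x ∈ convexHull ℝ V | l x = c} :=
    (convex_convexHull ℝ V).inter (convex_hyperplane l.isLinear c)
  have hF : IsExtreme ℝ (convexHull ℝ V) {x ∈ convexHull ℝ V | l x = c} :=
    isExtreme_sep_eq_of_forall_le (𝕜 := ℝ) l.toLinearMap hle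
  have hcompact : IsCompact {x ∈ convexHull ℝ V | l x = c} :=
    (hV.isCompact_convexHull ℝ).inter_right (isClosed_eq l.continuous continuous_const)
  suffices convexHull ℝ {v ∈ V | l v = c} = {x ∈ convexHull ℝ V | l x = c} by rwa [this]
  refine subset_antisymm (convexHull_min ?_ hconv) ?_
  · exact fun v hv => ⟨subset_convexHull ℝ V hv.1, hv.2⟩
  · refine (hF.subset_convexHull_inter hV hcompact hconv).trans (convexHull_mono ?_)
    exact fun v hv => ⟨hv.1, hv.2.2⟩

end KreinMilman

theorem IsChain.exists_isGreatest {β : Type*} [PartialOrder β] {s : Set β}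
    (hc : IsChain (· ≤ ·) s) (hs : s.Finite) (hne : s.Nonempty) : ∃ a, IsGreatest s a := by
  obtain ⟨a, ha⟩ := hs.exists_maximal hne
  exact ⟨a, ha.prop, fun b hb => (hc.total ha.prop hb).elim (ha.le_of_ge hb) id⟩

theorem IsChain.exists_isLeast {β : Type*} [PartialOrder β] {s : Set β}
    (hc : IsChain (· ≤ ·) s) (hs : s.Finite) (hne : s.Nonempty) : ∃ a, IsLeast s a := by
  obtain ⟨a, ha⟩ := hs.exists_minimal hne
  exact ⟨a, ha.prop, fun b hb => (hc.total ha.prop hb).elim id (ha.le_of_le hb)⟩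

section IndicatorVectors

variable {ι : Type*}

theorem rho_apply (I : Set ι) (a : ι) [Decidable (a ∈ I)] :
    rho I a = if a ∈ I then 1 else 0 := by
  simp [rho, Set.indicator_apply]

theorem rho_le_one (I : Set ι) (a : ι) : rho I a ≤ 1 := by
  classical
  rw [rho_apply]; split_ifs <;> norm_num

theorem rho_nonneg (I : Set ι) (a : ι) : 0 ≤ rho I a := by
  classical
  rw [rho_apply]; split_ifs <;> norm_num

theorem rho_eq_one_iff {I : Set ι} {a : ι} : rho I a = 1 ↔ a ∈ I := by
  classical
  rw [rho_apply]; split_ifs <;> simp_all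

theorem rho_eq_zero_iff {I : Set ι} {a : ι} : rho I a = 0 ↔ a ∉ I := by
  classical
  rw [rho_apply]; split_ifs <;> simp_all

theorem IsLowerSet.rho_le_rho [Preorder ι] {I : Set ι} (hI : IsLowerSet I) {u v : ι} (h : u ≤ v) :
    rho I v ≤ rho I u := by
  by_cases hv : v ∈ I
  · rw [rho_eq_one_iff.2 hv, rho_eq_one_iff.2 (hI h hv)]
  · rw [rho_eq_zero_iff.2 hv]
    exact rho_nonneg I u

theorem IsLowerSet.rho_eq_rho_iff [Preorder ι] {I : Set ι} (hI : IsLowerSet I) {u v : ι}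
    (h : u ≤ v) : rho I v = rho I u ↔ (u ∈ I → v ∈ I) := by
  by_cases hv : v ∈ I
  · simp [rho_eq_one_iff.2 hv, rho_eq_one_iff.2 (hI h hv), hv]
  · rw [rho_eq_zero_iff.2 hv, eq_comm, rho_eq_zero_iff]
    simp [hv]

theorem rho_injective : Function.Injective (rho : Set ι → ι → ℝ) := by
  intro I J h
  ext a
  classical
  have := congrFun h a
  by_cases a ∈ I <;> by_cases a ∈ J <;> simp_all [rho_apply]

theorem rho_union_add_rho_inter (I J : Set ι) :
    rho (I ∪ J) + rho (I ∩ J) = rho I + rho J :=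
  Set.indicator_union_add_inter 1 I J

theorem rho_mem_extremePoints_cube (I : Set ι) :
    rho I ∈ (univ.pi fun _ : ι => Icc (0 : ℝ) 1).extremePoints ℝ := by
  classical
  rw [extremePoints_pi]
  intro a _
  rw [extremePoints_Icc zero_le_one, rho_apply]
  split_ifs <;> simp

theorem eq_or_eq_of_rho_mem_segment {I J K : Set ι}
    (h : rho K ∈ segment ℝ (rho I) (rho J)) : K = I ∨ K = J := by
  have hcube : ∀ L : Set ι, rho L ∈ univ.pi fun _ : ι => Icc (0 : ℝ) 1 :=
    fun L => extremePoints_subset (rho_mem_extremePoints_cube L)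
  rcases (mem_extremePoints_iff_forall_segment.1 (rho_mem_extremePoints_cube K)).2
    _ (hcube I) _ (hcube J) h with h | h
  exacts [Or.inl (rho_injective h).symm, Or.inr (rho_injective h).symm]

theorem isPosetIdeal_iff_isLowerSet [PartialOrder ι] {I : Set ι} :
    IsPosetIdeal I ↔ IsLowerSet I :=
  ⟨fun h _ _ hba ha => h hba ha, fun h _ _ hab hb => h hab hb⟩

end IndicatorVectors

theorem orderPolytope_eq_convexHull_image :
    orderPolytope α = convexHull ℝ (rho '' {I | IsLowerSet I}) := by
  simp only [orderPolytope, isPosetIdeal_iff_isLowerSet]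
  congr 1
  ext x
  simp [eq_comm]

theorem rho_mem_orderPolytope {I : Set α} (hI : IsLowerSet I) : rho I ∈ orderPolytope α := by
  rw [orderPolytope_eq_convexHull_image]
  exact subset_convexHull ℝ _ ⟨I, hI, rfl⟩

theorem extremePoints_orderPolytope_subset :
    (orderPolytope α).extremePoints ℝ ⊆ rho '' {I | IsLowerSet I} := by
  rw [orderPolytope_eq_convexHull_image]
  exact extremePoints_convexHull_subset

namespace IsEdgeOf

variable {I J : Set α}

theorem eq_or_eq_of_rho_add_rho_eq (hedge : IsEdgeOf (orderPolytope α) (rho I) (rho J))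
    {A B : Set α} (hA : IsLowerSet A) (hB : IsLowerSet B) (hsum : rho A + rho B = rho I + rho J) :
    A = I ∨ A = J :=
  eq_or_eq_of_rho_mem_segment <|
    hedge.2.mem_segment_of_add_eq (rho_mem_orderPolytope hA) (rho_mem_orderPolytope hB) hsum

theorem subset_or_subset (hedge : IsEdgeOf (orderPolytope α) (rho I) (rho J))
    (hI : IsLowerSet I) (hJ : IsLowerSet J) : I ⊆ J ∨ J ⊆ I := by
  rcases hedge.eq_or_eq_of_rho_add_rho_eq (hI.union hJ) (hI.inter hJ)
    (rho_union_add_rho_inter I J) with h | h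
  exacts [Or.inr (union_eq_left.1 h), Or.inl (union_eq_right.1 h)]

/-- If a lower set `K` cuts `J \ I` into two nonempty pieces, the cut crosses a comparable pair,
since otherwise `ρ I + ρ J` would split as `ρ (I ∪ (J ∩ K)) + ρ (I ∪ (J \ K))`. -/
theorem exists_le_mem_not_mem (hedge : IsEdgeOf (orderPolytope α) (rho I) (rho J))
    (hI : IsLowerSet I) (hJ : IsLowerSet J) (hIJ : I ⊆ J) {K : Set α} (hK : IsLowerSet K)
    {x y : α} (hy : y ∈ (J ∩ K) \ I) (hx : x ∈ J \ (I ∪ K)) :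
    ∃ u v, u ≤ v ∧ u ∈ K ∧ v ∉ K ∧ u ∉ I ∧ v ∈ J := by
  by_contra! hcut
  have hB : IsLowerSet (I ∪ (J \ K)) := by
    rintro b a hab (hb | ⟨hbJ, hbK⟩)
    · exact Or.inl (hI hab hb)
    · by_cases haI : a ∈ I
      · exact Or.inl haI
      · exact Or.inr ⟨hJ hab hbJ, fun haK => hcut a b hab haK hbK haI hbJ⟩
  have hsum : rho (I ∪ (J ∩ K)) + rho (I ∪ (J \ K)) = rho I + rho J := by
    rw [← rho_union_add_rho_inter, add_comm (rho I)]
    congr 2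
    · ext a; by_cases a ∈ I <;> by_cases a ∈ K <;> simp_all [@hIJ a]
    · ext a; by_cases a ∈ K <;> simp_all
  rcases hedge.eq_or_eq_of_rho_add_rho_eq (hI.union (hJ.inter hK)) hB hsum with h | h
  · exact hy.2 (h ▸ Or.inr hy.1)
  · rw [← h] at hx
    exact hx.2 (hx.1.elim Or.inl fun hx => Or.inr hx.2)

end IsEdgeOf

theorem isChain_of_isEdgeOf {𝒞 : Set (Set α)} (h𝒞 : ∀ I ∈ 𝒞, IsLowerSet I)
    (hedge : ∀ I ∈ 𝒞, ∀ J ∈ 𝒞, I ≠ J → IsEdgeOf (orderPolytope α) (rho I) (rho J)) :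
    IsChain (· ⊆ ·) 𝒞 :=
  fun I hI J hJ hIJ => (hedge I hI J hJ hIJ).subset_or_subset (h𝒞 I hI) (h𝒞 J hJ)

/-- `ρ J` satisfies with equality each defining inequality `x a ≤ 1`, `0 ≤ x a`, `x v ≤ x u`
(`u ≤ v`) of `O(P)` that every `ρ I`, `I ∈ 𝒞`, satisfies with equality. -/
def InMinimalFace {ι : Type*} [PartialOrder ι] (𝒞 : Set (Set ι)) (J : Set ι) : Prop :=
  (∀ a, (∀ I ∈ 𝒞, a ∈ I) → a ∈ J) ∧ (∀ a, (∀ I ∈ 𝒞, a ∉ I) → a ∉ J) ∧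
    ∀ ⦃u v⦄, u ≤ v → (∀ I ∈ 𝒞, u ∈ I → v ∈ I) → u ∈ J → v ∈ J

theorem inMinimalFace_of_mem {ι : Type*} [PartialOrder ι] {𝒞 : Set (Set ι)} {I : Set ι}
    (hI : I ∈ 𝒞) : InMinimalFace 𝒞 I :=
  ⟨fun _ h => h I hI, fun _ h => h I hI, fun _ _ _ h => h I hI⟩

section MinimalFace

variable (𝒞 : Set (Set α))

open Classical in
noncomputable def minimalFaceFunctional : StrongDual ℝ (α → ℝ) :=
  let x (a : α) : StrongDual ℝ (α → ℝ) := ContinuousLinearMap.proj a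
  ∑ a with ∀ I ∈ 𝒞, a ∈ I, x a + ∑ a with ∀ I ∈ 𝒞, a ∉ I, -x a
    + ∑ p : α × α with p.1 ≤ p.2 ∧ ∀ I ∈ 𝒞, p.1 ∈ I → p.2 ∈ I, (x p.2 - x p.1)

open Classical Finset in
noncomputable def minimalFaceBound : ℝ := #{a | ∀ I ∈ 𝒞, a ∈ I}

open Classical in
theorem minimalFaceFunctional_apply (x : α → ℝ) :
    minimalFaceFunctional 𝒞 x = ∑ a with ∀ I ∈ 𝒞, a ∈ I, x a
      + ∑ a with ∀ I ∈ 𝒞, a ∉ I, -x a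
      + ∑ p : α × α with p.1 ≤ p.2 ∧ ∀ I ∈ 𝒞, p.1 ∈ I → p.2 ∈ I, (x p.2 - x p.1) := by
  simp [minimalFaceFunctional]

variable {𝒞} {J : Set α}

open Classical in
theorem minimalFaceBound_eq : minimalFaceBound 𝒞 = ∑ _a with ∀ I ∈ 𝒞, _a ∈ I, (1 : ℝ)
      + ∑ _a with ∀ I ∈ 𝒞, _a ∉ I, (0 : ℝ)
      + ∑ _p : α × α with _p.1 ≤ _p.2 ∧ ∀ I ∈ 𝒞, _p.1 ∈ I → _p.2 ∈ I, (0 : ℝ) := by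
  simp [minimalFaceBound]

theorem minimalFaceFunctional_rho_le (hJ : IsLowerSet J) :
    minimalFaceFunctional 𝒞 (rho J) ≤ minimalFaceBound 𝒞 := by
  classical
  rw [minimalFaceFunctional_apply, minimalFaceBound_eq]
  gcongr with a _ a _ p hp
  · exact rho_le_one J a
  · exact neg_nonpos.2 (rho_nonneg J a)
  · exact sub_nonpos.2 (hJ.rho_le_rho (Finset.mem_filter.1 hp).2.1)

theorem minimalFaceFunctional_rho_eq_iff (hJ : IsLowerSet J) :
    minimalFaceFunctional 𝒞 (rho J) = minimalFaceBound 𝒞 ↔ InMinimalFace 𝒞 J := by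
  classical
  have h₁ : ∀ a ∈ ({a | ∀ I ∈ 𝒞, a ∈ I} : Finset α), rho J a ≤ 1 :=
    fun a _ => rho_le_one J a
  have h₀ : ∀ a ∈ ({a | ∀ I ∈ 𝒞, a ∉ I} : Finset α), -rho J a ≤ 0 :=
    fun a _ => neg_nonpos.2 (rho_nonneg J a)
  have hE : ∀ p ∈ ({p | p.1 ≤ p.2 ∧ ∀ I ∈ 𝒞, p.1 ∈ I → p.2 ∈ I} : Finset (α × α)),
      rho J p.2 - rho J p.1 ≤ 0 :=
    fun p hp => sub_nonpos.2 (hJ.rho_le_rho (Finset.mem_filter.1 hp).2.1)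
  rw [minimalFaceFunctional_apply, minimalFaceBound_eq,
    add_eq_add_iff_eq_and_eq (add_le_add (Finset.sum_le_sum h₁) (Finset.sum_le_sum h₀))
      (Finset.sum_le_sum hE),
    add_eq_add_iff_eq_and_eq (Finset.sum_le_sum h₁) (Finset.sum_le_sum h₀),
    Finset.sum_eq_sum_iff_of_le h₁, Finset.sum_eq_sum_iff_of_le h₀, Finset.sum_eq_sum_iff_of_le hE]
  simp only [Finset.mem_filter, Finset.mem_univ, true_and, rho_eq_one_iff, neg_eq_zero,
    rho_eq_zero_iff, sub_eq_zero, InMinimalFace, and_assoc, Prod.forall]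
  refine and_congr_right' (and_congr_right' ⟨fun h u v huv hsep => ?_, fun h u v huv => ?_⟩)
  · exact (hJ.rho_eq_rho_iff huv).1 (h u v ⟨huv, hsep⟩)
  · exact (hJ.rho_eq_rho_iff huv.1).2 (h huv.1 huv.2)

end MinimalFace

/- Take the largest `I ∈ 𝒞` inside `J` and the smallest `M ∈ 𝒞` with `J ∩ M ⊄ I`. Then `J` cuts
`M \ I` into two nonempty pieces, so the edge `ρ I ρ M` yields `u ≤ v` in `M \ I` with `u ∈ J`,
`v ∉ J`. As `J` is in the minimal face, some `K ∈ 𝒞` separates `u` from `v`; then `J ∩ K ⊄ I`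
forces `M ⊆ K`, contradicting `v ∈ M \ K`. -/
theorem mem_of_inMinimalFace {𝒞 : Set (Set α)} (h𝒞 : ∀ I ∈ 𝒞, IsLowerSet I)
    (hedge : ∀ I ∈ 𝒞, ∀ J ∈ 𝒞, I ≠ J → IsEdgeOf (orderPolytope α) (rho I) (rho J))
    (hne : 𝒞.Nonempty) {J : Set α} (hJ : IsLowerSet J) (hface : InMinimalFace 𝒞 J) : J ∈ 𝒞 := by
  by_contra hJ𝒞
  have hchain := isChain_of_isEdgeOf h𝒞 hedge
  obtain ⟨I₀, hI₀, hI₀least⟩ := hchain.exists_isLeast (toFinite 𝒞) hne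
  obtain ⟨I, ⟨hI, hIJ⟩, hIgreatest⟩ := (hchain.mono (sep_subset 𝒞 (· ⊆ J))).exists_isGreatest
    (toFinite _) ⟨I₀, hI₀, fun a ha => hface.1 a fun K hK => hI₀least hK ha⟩
  obtain ⟨a, haJ, haI⟩ := not_subset.1 fun hJI => hJ𝒞 (hJI.antisymm hIJ ▸ hI)
  obtain ⟨M₀, hM₀, haM₀⟩ : ∃ M ∈ 𝒞, a ∈ M := by
    by_contra! h
    exact hface.2.1 a h haJ
  obtain ⟨M, ⟨hM, hJMI⟩, hMleast⟩ := (hchain.mono (sep_subset 𝒞 (¬ J ∩ · ⊆ I))).exists_isLeast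
    (toFinite _) ⟨M₀, hM₀, fun h => haI (h ⟨haJ, haM₀⟩)⟩
  have hIM : I ⊆ M :=
    (hchain.total hI hM).resolve_right fun hMI => hJMI (inter_subset_right.trans hMI)
  obtain ⟨y, ⟨hyJ, hyM⟩, hyI⟩ := not_subset.1 hJMI
  obtain ⟨x, hxM, hxJ⟩ := not_subset.1 fun hMJ => hJMI fun b hb => hIgreatest ⟨hM, hMJ⟩ hb.2
  have hIneM : I ≠ M := by
    rintro rfl
    exact hyI hyM
  obtain ⟨u, v, huv, huJ, hvJ, huI, hvM⟩ := (hedge I hI M hM hIneM).exists_le_mem_not_mem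
    (h𝒞 I hI) (h𝒞 M hM) hIM hJ ⟨⟨hyM, hyJ⟩, hyI⟩ ⟨hxM, fun h => h.elim (hxJ ∘ @hIJ x) hxJ⟩
  obtain ⟨K, hK, huK, hvK⟩ : ∃ K ∈ 𝒞, u ∈ K ∧ v ∉ K := by
    by_contra! h
    exact hvJ (hface.2.2 huv h huJ)
  exact hvK (hMleast ⟨hK, fun h => huI (h ⟨huJ, huK⟩)⟩ hvM)

theorem clique_convexHull_isFace (C : Set (α → ℝ))
    (hvert : ∀ v ∈ C, v ∈ Set.extremePoints ℝ (orderPolytope α))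
    (hclique : ∀ v ∈ C, ∀ w ∈ C, v ≠ w → IsEdgeOf (orderPolytope α) v w) :
    IsExtreme ℝ (orderPolytope α) (convexHull ℝ C) := by
  rcases C.eq_empty_or_nonempty with rfl | ⟨v₀, hv₀⟩
  · simpa using isExposed_empty.isExtreme
  have hC : C ⊆ rho '' {I | IsLowerSet I} :=
    fun v hv => extremePoints_orderPolytope_subset (hvert v hv)
  obtain ⟨I₀, hI₀, rfl⟩ := hC hv₀
  set 𝒞 := {I | IsLowerSet I ∧ rho I ∈ C}
  have hedge : ∀ I ∈ 𝒞, ∀ J ∈ 𝒞, I ≠ J → IsEdgeOf (orderPolytope α) (rho I) (rho J) :=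
    fun I hI J hJ hIJ => hclique _ hI.2 _ hJ.2 (rho_injective.ne hIJ)
  have hCface : C = {v ∈ rho '' {I | IsLowerSet I} |
      minimalFaceFunctional 𝒞 v = minimalFaceBound 𝒞} := by
    ext v
    refine ⟨fun hv => ?_, ?_⟩
    · obtain ⟨I, hI, rfl⟩ := hC hv
      exact ⟨⟨I, hI, rfl⟩, (minimalFaceFunctional_rho_eq_iff hI).2 (inMinimalFace_of_mem ⟨hI, hv⟩)⟩
    · rintro ⟨⟨J, hJ, rfl⟩, hJface⟩
      exact (mem_of_inMinimalFace (fun I hI => hI.1) hedge ⟨I₀, hI₀, hv₀⟩ hJ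
        ((minimalFaceFunctional_rho_eq_iff hJ).1 hJface)).2
  rw [hCface, orderPolytope_eq_convexHull_image]
  exact isExtreme_convexHull_sep_eq (toFinite _) _
    fun v ⟨J, hJ, hv⟩ => hv ▸ minimalFaceFunctional_rho_le hJ
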